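/- Let λ be a maximal unrefinable partition of T_{n,n−2k} = n(n+1)/2 − (n−2k) (where 2 ≤ 2k ≤ n−4) with largest part λ_t = 2n−5, n−2 parts, and n−3 missing parts. Then in the associated Young diagram Y = KN(S_λ), the first row and first column both contain n−2 cells, and h_{i,1} = h_{1,i} for all 1 ≤ i ≤ n−2; consequently h_{i,j} = h_{j,i} for all valid i, j, i.e., Y is self-conjugate. -/

import Mathlib

/-- A partition into distinct parts, encoded as a `Finset ℕ` of its parts, is *refinable*
if some part can be replaced by two or more distinct positive integers, none of which is
already a part, summing to it. -/
def Refinable (P : Finset ℕ) : Prop :=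
  ∃ a ∈ P, ∃ B : Finset ℕ, 2 ≤ B.card ∧ (∀ b ∈ B, 0 < b ∧ b ∉ P) ∧ B.sum id = a

/-- The `i`-th largest element (0-based) of `P`. -/
def partDesc (P : Finset ℕ) (i : ℕ) : ℕ := ((P.sort (· ≤ ·)).reverse).getD i 0

/-- Length of the `i`-th row (0-based) of the Young diagram obtained from the numerical
set `ℕ \ P` via the Keith–Nath transformation: the number of east steps (elements of the
numerical set) preceding the north step at the `i`-th largest gap. -/
def knRow (P : Finset ℕ) (i : ℕ) : ℕ :=
  ((Finset.range (partDesc P i)).filter (fun s => s ∉ P)).card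

/-- Length of the `j`-th column (0-based) of the Keith–Nath Young diagram. -/
def knCol (P : Finset ℕ) (j : ℕ) : ℕ :=
  ((Finset.range P.card).filter (fun i => j < knRow P i)).card

/-- Hook length of the cell `(i, j)` (0-based) of the Keith–Nath Young diagram:
arm + leg + 1. -/
def knHook (P : Finset ℕ) (i j : ℕ) : ℕ := knRow P i + knCol P j - i - j - 1

/-- Total number of cells of the Keith–Nath Young diagram. -/
def knCells (P : Finset ℕ) : ℕ := ∑ i ∈ Finset.range P.card, knRow P i

/-!
Unrefinability of the largest part `N = 2n - 5` means that for every gap `s ≤ N` the number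
`N - s` is a part, for otherwise `N = s + (N - s)` refines it. As there are exactly as many parts
as gaps in `[0, N]`, the reflection `x ↦ N - x` exchanges them. Row `i` of the Keith–Nath diagram
counts the gaps below the part `p_i`, and the reflection turns these into the parts exceeding
`N - p_i`; so the cell `(i, j)` lies in the diagram iff `N < p_i + p_j`. This condition is
symmetric in `i` and `j`, hence columns equal rows and the hooks are symmetric.
-/

open Finset

section partDesc

variable {P : Finset ℕ}

theorem partDesc_mem {i : ℕ} (hi : i < #P) : partDesc P i ∈ P := by
  rw [partDesc, List.getD_eq_getElem _ _ (by simpa using hi), ← mem_sort (· ≤ ·),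
    ← List.mem_reverse]
  exact List.getElem_mem _

theorem partDesc_of_card_le {i : ℕ} (hi : #P ≤ i) : partDesc P i = 0 := by
  simp [partDesc, hi]

theorem partDesc_strictAntiOn : StrictAntiOn (partDesc P) (Set.Iio #P) := by
  intro i hi j hj hij
  simp only [Set.mem_Iio] at hi hj
  rw [partDesc, partDesc, List.getD_eq_getElem _ _ (by simpa using hj),
    List.getD_eq_getElem _ _ (by simpa using hi), List.getElem_reverse, List.getElem_reverse]
  exact P.sortedLT_sort.strictMono_get (by simp only [length_sort, Fin.mk_lt_mk]; omega)

theorem exists_partDesc_eq {y : ℕ} (hy : y ∈ P) : ∃ i < #P, partDesc P i = y := by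
  rw [← mem_sort (· ≤ ·), ← List.mem_reverse, List.mem_iff_getElem] at hy
  obtain ⟨i, hi, rfl⟩ := hy
  exact ⟨i, by simpa using hi, List.getD_eq_getElem _ _ hi⟩

theorem partDesc_zero (hne : P.Nonempty) : partDesc P 0 = P.max' hne := by
  refine le_antisymm (P.le_max' _ (partDesc_mem hne.card_pos)) ?_
  obtain ⟨i, hi, hpi⟩ := exists_partDesc_eq (P.max'_mem hne)
  rw [← hpi]
  exact partDesc_strictAntiOn.antitoneOn (by simp [hne.card_pos]) hi (Nat.zero_le i)

theorem lt_card_filter_lt_iff_lt_partDesc {j : ℕ} (hj : j < #P) (c : ℕ) :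
    j < #{y ∈ P | c < y} ↔ c < partDesc P j := by
  constructor
  · intro hlt
    by_contra! hle
    have hsub : {y ∈ P | c < y} ⊆ (range j).image (partDesc P) := by
      intro y hy
      rw [mem_filter] at hy
      obtain ⟨i, hi, rfl⟩ := exists_partDesc_eq hy.1
      refine mem_image.2 ⟨i, mem_range.2 ?_, rfl⟩
      by_contra! hji
      exact absurd (partDesc_strictAntiOn.antitoneOn hj hi hji) (by omega)
    have := (card_le_card hsub).trans card_image_le
    rw [card_range] at this
    omega
  · intro hlt
    have hsub : (range (j + 1)).image (partDesc P) ⊆ {y ∈ P | c < y} := by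
      intro y hy
      obtain ⟨i, hi, rfl⟩ := mem_image.1 hy
      rw [mem_range] at hi
      have hi' : i ∈ Set.Iio #P := Set.mem_Iio.2 (by omega)
      exact mem_filter.2 ⟨partDesc_mem hi',
        hlt.trans_le (partDesc_strictAntiOn.antitoneOn hi' hj (by omega))⟩
    have hinj : Set.InjOn (partDesc P) (range (j + 1)) :=
      partDesc_strictAntiOn.injOn.mono (by intro i; simp only [coe_range, Set.mem_Iio]; omega)
    have := card_le_card hsub
    rw [card_image_of_injOn hinj, card_range] at this
    omega

end partDesc

def HasComplementProperty (P : Finset ℕ) (N : ℕ) : Prop :=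
  ∀ x, x ∈ P ↔ x ≤ N ∧ N - x ∉ P

namespace HasComplementProperty

variable {P : Finset ℕ} {N : ℕ}

theorem le (h : HasComplementProperty P N) {x : ℕ} (hx : x ∈ P) : x ≤ N := ((h x).1 hx).1

theorem card_range_filter_notMem (h : HasComplementProperty P N) {a : ℕ} (ha : a ≤ N) :
    #{s ∈ range a | s ∉ P} = #{y ∈ P | N - a < y} := by
  apply card_nbij' (N - ·) (N - ·)
  · intro s hs
    simp only [coe_filter, mem_range, Set.mem_ofPred_eq] at hs ⊢
    have := h (N - s)
    rw [Nat.sub_sub_self (by omega)] at this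
    exact ⟨this.2 ⟨Nat.sub_le _ _, hs.2⟩, by omega⟩
  · intro y hy
    simp only [coe_filter, mem_range, Set.mem_ofPred_eq] at hy ⊢
    have := h.le hy.1
    exact ⟨by omega, ((h y).1 hy.1).2⟩
  · intro s hs
    simp only [coe_filter, mem_range, Set.mem_ofPred_eq] at hs
    exact Nat.sub_sub_self (by omega)
  · intro y hy
    simp only [coe_filter, Set.mem_ofPred_eq] at hy
    exact Nat.sub_sub_self (h.le hy.1)

theorem knRow_eq_card_filter (h : HasComplementProperty P N) {i : ℕ} (hi : i < #P) :
    knRow P i = #{y ∈ P | N - partDesc P i < y} :=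
  h.card_range_filter_notMem (h.le (partDesc_mem hi))

theorem knRow_le_card (h : HasComplementProperty P N) (i : ℕ) : knRow P i ≤ #P := by
  rcases lt_or_ge i #P with hi | hi
  · exact h.knRow_eq_card_filter hi ▸ card_filter_le _ _
  · simp [knRow, partDesc_of_card_le hi]

theorem lt_knRow_iff (h : HasComplementProperty P N) {i j : ℕ} (hi : i < #P) (hj : j < #P) :
    j < knRow P i ↔ N < partDesc P i + partDesc P j := by
  rw [h.knRow_eq_card_filter hi, lt_card_filter_lt_iff_lt_partDesc hj]
  have := h.le (partDesc_mem hi)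
  omega

theorem lt_knRow_comm (h : HasComplementProperty P N) {i : ℕ} (hi : i < #P) (j : ℕ) :
    j < knRow P i ↔ i < knRow P j := by
  rcases lt_or_ge j #P with hj | hj
  · rw [h.lt_knRow_iff hi hj, h.lt_knRow_iff hj hi, add_comm]
  · have hj0 : knRow P j = 0 := by simp [knRow, partDesc_of_card_le hj]
    have := h.knRow_le_card i
    omega

theorem knCol_eq_knRow (h : HasComplementProperty P N) : knCol P = knRow P := by
  funext j
  have hcol : {i ∈ range #P | j < knRow P i} = range (knRow P j) := by
    ext i
    simp only [mem_filter, mem_range]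
    have := h.knRow_le_card j
    constructor
    · rintro ⟨hi, hji⟩
      exact (h.lt_knRow_comm hi j).1 hji
    · intro hij
      exact ⟨by omega, (h.lt_knRow_comm (by omega) j).2 hij⟩
  rw [knCol, hcol, card_range]

theorem knHook_comm (h : HasComplementProperty P N) (i j : ℕ) : knHook P i j = knHook P j i := by
  simp only [knHook, h.knCol_eq_knRow]
  omega

theorem knRow_zero (h : HasComplementProperty P N) (hN : N ∈ P) : knRow P 0 = #P := by
  have hne : P.Nonempty := ⟨N, hN⟩
  have hmax : P.max' hne = N := le_antisymm (h.le (P.max'_mem hne)) (P.le_max' N hN)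
  have h0 : 0 ∉ P := fun h0 => ((h 0).1 h0).2 hN
  rw [h.knRow_eq_card_filter hne.card_pos, partDesc_zero hne, hmax, Nat.sub_self,
    filter_true_of_mem]
  intro y hy
  exact Nat.pos_of_ne_zero (by rintro rfl; exact h0 hy)

end HasComplementProperty

theorem refinable_of_add_eq {P : Finset ℕ} {a x y : ℕ} (ha : a ∈ P) (hx : 0 < x) (hy : 0 < y)
    (hxy : x ≠ y) (hxP : x ∉ P) (hyP : y ∉ P) (hsum : x + y = a) : Refinable P := by
  refine ⟨a, ha, {x, y}, by rw [card_pair hxy], ?_, by rw [sum_pair hxy, ← hsum]; rfl⟩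
  simp only [mem_insert, mem_singleton]
  rintro b (rfl | rfl) <;> tauto

theorem hasComplementProperty_of_not_refinable {P : Finset ℕ} {N : ℕ} (hunref : ¬ Refinable P)
    (hN : N ∈ P) (hle : ∀ p ∈ P, p ≤ N) (hcard : 2 * #P = N + 1) :
    HasComplementProperty P N := by
  set gaps := range (N + 1) \ P
  have hmaps : ∀ s ∈ gaps, N - s ∈ P := by
    intro s hs
    rw [mem_sdiff, mem_range] at hs
    have hsN : s ≠ N := fun h => hs.2 (h ▸ hN)
    by_contra hsP
    rcases Nat.eq_zero_or_pos s with rfl | hpos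
    · exact hsP hN
    · exact hunref (refinable_of_add_eq hN hpos (by omega) (by omega) hs.2 hsP (by omega))
  have hsub : P ⊆ range (N + 1) := fun p hp => mem_range.2 (Nat.lt_succ_of_le (hle p hp))
  have himage : gaps.image (N - ·) = P := by
    refine eq_of_subset_of_card_le (image_subset_iff.2 hmaps) ?_
    rw [card_image_of_injOn, card_sdiff_of_subset hsub, card_range]
    · omega
    · intro s hs t ht (hst : N - s = N - t)
      rw [mem_coe, mem_sdiff, mem_range] at hs ht
      omega
  intro x
  constructor
  · intro hx
    obtain ⟨s, hs, rfl⟩ := mem_image.1 (himage ▸ hx)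
    rw [mem_sdiff, mem_range] at hs
    rw [Nat.sub_sub_self (by omega)]
    exact ⟨Nat.sub_le _ _, hs.2⟩
  · rintro ⟨hx, hxP⟩
    exact himage ▸ mem_image.2 ⟨N - x, mem_sdiff.2 ⟨mem_range.2 (by omega), hxP⟩,
      Nat.sub_sub_self hx⟩

theorem stmt12_general (P : Finset ℕ) (n : ℕ)
    (hne : P.Nonempty) (hunref : ¬ Refinable P)
    (hmax : P.max' hne = 2 * n - 5) (hcard : P.card = n - 2) :
    knRow P 0 = n - 2 ∧ knCol P 0 = n - 2 ∧
    (∀ i : ℕ, i < n - 2 → knHook P i 0 = knHook P 0 i) ∧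
    (∀ i j : ℕ, i < P.card → j < knRow P i →
      (j < P.card ∧ i < knRow P j ∧ knHook P i j = knHook P j i)) := by
  have hn : 3 ≤ n := by have := hne.card_pos; rw [hcard] at this; omega
  have hN : 2 * n - 5 ∈ P := hmax ▸ P.max'_mem hne
  have hP : HasComplementProperty P (2 * n - 5) :=
    hasComplementProperty_of_not_refinable hunref hN (fun p hp => hmax ▸ P.le_max' p hp)
      (by omega)
  have hrow : knRow P 0 = n - 2 := (hP.knRow_zero hN).trans hcard
  refine ⟨hrow, hP.knCol_eq_knRow ▸ hrow, fun i _ => hP.knHook_comm i 0, fun i j hi hj => ?_⟩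
  exact ⟨hj.trans_le (hP.knRow_le_card i), (hP.lt_knRow_comm hi j).1 hj, hP.knHook_comm i j⟩

/-- A maximal unrefinable partition of `T_{n, n-2k}` with largest part `2n - 5`, `n - 2`
parts and `n - 3` missing parts has a self-conjugate Keith–Nath Young diagram: first row
and first column both have `n - 2` cells, `h_{i,0} = h_{0,i}`, and `h_{i,j} = h_{j,i}`
for all cells (with the transposed cell also in the diagram). -/
theorem stmt12 (P : Finset ℕ) (n k : ℕ) (hk : 2 ≤ 2 * k) (hkn : 2 * k ≤ n - 4)
    (hne : P.Nonempty) (hpos : ∀ p ∈ P, 0 < p) (hunref : ¬ Refinable P)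
    (hsum : P.sum id = n * (n + 1) / 2 - (n - 2 * k))
    (hmax : P.max' hne = 2 * n - 5) (hcard : P.card = n - 2)
    (hmiss : ((Finset.Icc 1 (P.max' hne)) \ P).card = n - 3) :
    knRow P 0 = n - 2 ∧ knCol P 0 = n - 2 ∧
    (∀ i : ℕ, i < n - 2 → knHook P i 0 = knHook P 0 i) ∧
    (∀ i j : ℕ, i < P.card → j < knRow P i →
      (j < P.card ∧ i < knRow P j ∧ knHook P i j = knHook P j i)) :=
  stmt12_general P n hne hunref hmax hcard
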